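/- arXiv:1806.01537 — 8 statements merged into one kernel-verified Lean document; each statement's English description precedes it below -/
import Mathlib

section
/- Let n, k, p, q ∈ ℕ with k ≤ n and p ≤ n·q. Then the number of partitions with k parts fitting in a k×(n−k) box, of size p and trace q, equals the number of partitions with k parts fitting in a k×(n−k) box, of size n·q − p and trace q; that is, part(p, k, n−k, q) = part(n·q − p, k, n−k, q). (This is the combinatorial content of the palindrome duality rank^{p,q} H(Gr_k(ℝ^{n,1})) = rank^{nq−p,q} H(Gr_k(ℝ^{n,1})).) -/
/-!
Since `l i + i` is strictly increasing, a monotone `l` has trace `q` exactly when its Durfee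
square of side `q` sits in the last `q` rows: the first `k - q` rows have length at most `q` and
the last `q` rows have length between `q` and `m`. Complementing the first `k - q` rows in the
`(k - q) × q` box, and the last `q` rows in the `q × (m - q)` box to the right of the square,
each block read in reverse order, is an involution. It preserves monotonicity, the box and the
trace, and sends size `p` to `(k - q) q + q (m + q) - p = q (k + m) - p`.
-/

open Finset

/-- `partCount p k m t` is the number of partitions with `k` parts (a monotone
function `Fin k → ℕ`) fitting in a `k × m` box, of size `p` and trace `t`. -/
noncomputable def partCount (p k m t : ℕ) : ℕ :=
  Nat.card {l : Fin k → ℕ // Monotone l ∧ (∀ i, l i ≤ m) ∧ (∑ i, l i) = p ∧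
    (Finset.univ.filter (fun i : Fin k => k ≤ l i + (i : ℕ))).card = t}

namespace BoxPartition

variable {k : ℕ}

def trace (l : Fin k → ℕ) : ℕ := #{i : Fin k | k ≤ l i + (i : ℕ)}

theorem trace_le (l : Fin k → ℕ) : trace l ≤ k :=
  (card_filter_le _ _).trans_eq (by simp)

theorem lt_sub_trace_iff {l : Fin k → ℕ} (hl : Monotone l) (i : Fin k) :
    (i : ℕ) < k - trace l ↔ l i + i < k := by
  have hcard : #{i : Fin k | l i + i < k} = k - trace l := by
    have := card_filter_add_card_filter_not (s := univ) fun i : Fin k => k ≤ l i + (i : ℕ)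
    simp only [card_univ, Fintype.card_fin, not_le] at this
    rw [trace]
    omega
  rw [← hcard]
  refine Fin.lt_card_filter_univ_iff_apply_of_imp _ fun i j hji hi => ?_
  have := hl hji
  have := Fin.le_def.mp hji
  omega

theorem card_filter_not_val_lt_sub {q : ℕ} (hq : q ≤ k) :
    #{i : Fin k | ¬ (i : ℕ) < k - q} = q := by
  have := card_filter_add_card_filter_not (s := univ) fun i : Fin k => (i : ℕ) < k - q
  rw [Fin.card_filter_val_lt, card_univ, Fintype.card_fin] at this
  omega

/-- The Durfee square of side `q` of `l` occupies its last `q` rows. -/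
structure DurfeeShape (m q : ℕ) (l : Fin k → ℕ) : Prop where
  side_le_rows : q ≤ k
  le_width : ∀ i, l i ≤ m
  short_row : ∀ i : Fin k, (i : ℕ) < k - q → l i ≤ q
  long_row : ∀ i : Fin k, k - q ≤ (i : ℕ) → q ≤ l i

section DurfeeShape

variable {m q : ℕ} {l : Fin k → ℕ}

theorem durfeeShape_of_trace_eq (hl : Monotone l) (hm : ∀ i, l i ≤ m) (hq : trace l = q) :
    DurfeeShape m q l := by
  have hqk : q ≤ k := hq ▸ trace_le l
  have hrow (i : Fin k) : (i : ℕ) < k - q ↔ l i + i < k := hq ▸ lt_sub_trace_iff hl i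
  refine ⟨hqk, hm, fun i hi => ?_, fun i hi => ?_⟩
  · have hlast := (hrow ⟨k - q - 1, by omega⟩).mp (by dsimp only; omega)
    have := @hl i ⟨k - q - 1, by omega⟩ (Fin.le_def.mpr (by dsimp only; omega))
    dsimp only at hlast
    omega
  · have hfirst := (hrow ⟨k - q, by omega⟩).not.mp (by dsimp only; omega)
    have := @hl ⟨k - q, by omega⟩ i (Fin.le_def.mpr (by dsimp only; omega))
    dsimp only at hfirst
    omega

theorem DurfeeShape.side_le_width (h : DurfeeShape m q l) : q ≤ m := by
  rcases Nat.eq_zero_or_pos q with hq | hq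
  · omega
  · have hlast : k - 1 < k := by have := h.side_le_rows; omega
    have := h.long_row ⟨k - 1, hlast⟩ (by simp only; omega)
    have := h.le_width ⟨k - 1, hlast⟩
    omega

theorem DurfeeShape.trace_eq (h : DurfeeShape m q l) : trace l = q := by
  rw [trace, ← card_filter_not_val_lt_sub h.side_le_rows]
  congr 1
  refine filter_congr fun i _ => ?_
  by_cases hi : (i : ℕ) < k - q
  · have := h.short_row i hi
    omega
  · have := h.long_row i (by omega)
    omega

end DurfeeShape

/-- Reverses the order of the rows `[0, k - q)` and, separately, of the rows `[k - q, k)`. -/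
def blockRev (k q : ℕ) (i : Fin k) : Fin k :=
  ⟨if (i : ℕ) < k - q then k - q - 1 - i else k - 1 - (i - (k - q)), by split_ifs <;> omega⟩

section BlockRev

variable {q : ℕ} {i j : Fin k}

theorem blockRev_lt_iff : (blockRev k q i : ℕ) < k - q ↔ (i : ℕ) < k - q := by
  simp only [blockRev]
  split_ifs <;> omega

theorem blockRev_involutive : Function.Involutive (blockRev k q) := fun i => by
  ext
  simp only [blockRev]
  split_ifs <;> omega

theorem blockRev_le_blockRev (hij : i ≤ j) (hblock : (i : ℕ) < k - q ↔ (j : ℕ) < k - q) :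
    blockRev k q j ≤ blockRev k q i := by
  rw [Fin.le_def] at hij ⊢
  simp only [blockRev]
  split_ifs <;> omega

end BlockRev

def dual (m q : ℕ) (l : Fin k → ℕ) (i : Fin k) : ℕ :=
  (if (i : ℕ) < k - q then q else m + q) - l (blockRev k q i)

section Dual

variable {m q : ℕ} {l : Fin k → ℕ} {i : Fin k}

theorem dual_of_lt (hi : (i : ℕ) < k - q) : dual m q l i = q - l (blockRev k q i) := by
  simp [dual, hi]

theorem dual_of_not_lt (hi : ¬ (i : ℕ) < k - q) :
    dual m q l i = m + q - l (blockRev k q i) := by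
  simp [dual, hi]

theorem DurfeeShape.dual_dual (h : DurfeeShape m q l) : dual m q (dual m q l) = l := by
  funext i
  by_cases hi : (i : ℕ) < k - q
  · rw [dual_of_lt hi, dual_of_lt (blockRev_lt_iff.mpr hi), blockRev_involutive]
    have := h.short_row i hi
    omega
  · rw [dual_of_not_lt hi, dual_of_not_lt (blockRev_lt_iff.not.mpr hi), blockRev_involutive]
    have := h.le_width i
    omega

theorem durfeeShape_dual (h : DurfeeShape m q l) : DurfeeShape m q (dual m q l) where
  side_le_rows := h.side_le_rows
  le_width i := by
    by_cases hi : (i : ℕ) < k - q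
    · rw [dual_of_lt hi]
      have := h.side_le_width
      omega
    · rw [dual_of_not_lt hi]
      have := h.long_row (blockRev k q i) (by rw [← not_lt, blockRev_lt_iff]; exact hi)
      omega
  short_row i hi := by
    rw [dual_of_lt hi]
    omega
  long_row i hi := by
    rw [dual_of_not_lt (by omega)]
    have := h.le_width (blockRev k q i)
    omega

theorem DurfeeShape.monotone_dual (h : DurfeeShape m q l) (hl : Monotone l) :
    Monotone (dual m q l) := by
  intro i j hij
  by_cases hi : (i : ℕ) < k - q <;> by_cases hj : (j : ℕ) < k - q
  · have := hl (blockRev_le_blockRev hij (iff_of_true hi hj))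
    rw [dual_of_lt hi, dual_of_lt hj]
    omega
  · have hd := durfeeShape_dual h
    exact (hd.short_row i hi).trans (hd.long_row j (by omega))
  · have := Fin.le_def.mp hij
    omega
  · have := hl (blockRev_le_blockRev hij (iff_of_false hi hj))
    rw [dual_of_not_lt hi, dual_of_not_lt hj]
    omega

theorem DurfeeShape.sum_dual_add_sum (h : DurfeeShape m q l) :
    ∑ i, dual m q l i + ∑ i, l i = q * (k + m) := by
  have hq := h.side_le_rows
  calc ∑ i, dual m q l i + ∑ i, l i
      = ∑ i, dual m q l i + ∑ i, l (blockRev k q i) := by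
        rw [blockRev_involutive.bijective.sum_comp]
    _ = ∑ i : Fin k, if (i : ℕ) < k - q then q else m + q := by
        rw [← sum_add_distrib]
        refine sum_congr rfl fun i _ => ?_
        by_cases hi : (i : ℕ) < k - q
        · have := h.short_row _ (blockRev_lt_iff.mpr hi)
          rw [dual_of_lt hi, if_pos hi]
          omega
        · have := h.le_width (blockRev k q i)
          rw [dual_of_not_lt hi, if_neg hi]
          omega
    _ = q * (k + m) := by
        rw [sum_ite, sum_const, sum_const, Fin.card_filter_val_lt, card_filter_not_val_lt_sub hq,
          smul_eq_mul, smul_eq_mul, min_eq_right (Nat.sub_le k q)]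
        obtain ⟨a, rfl⟩ := Nat.exists_eq_add_of_le hq
        rw [Nat.add_sub_cancel_left]
        ring

end Dual

theorem partCount_eq_partCount_sub {p k m q : ℕ} (hp : p ≤ q * (k + m)) :
    partCount p k m q = partCount (q * (k + m) - p) k m q := by
  have dual_mem {p p' : ℕ} (hpp' : p + p' = q * (k + m)) {l : Fin k → ℕ}
      (h : Monotone l ∧ (∀ i, l i ≤ m) ∧ ∑ i, l i = p ∧ trace l = q) :
      Monotone (dual m q l) ∧ (∀ i, dual m q l i ≤ m) ∧ ∑ i, dual m q l i = p' ∧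
        trace (dual m q l) = q := by
    obtain ⟨hl, hm, hsum, hq⟩ := h
    have hshape := durfeeShape_of_trace_eq hl hm hq
    refine ⟨hshape.monotone_dual hl, (durfeeShape_dual hshape).le_width, ?_,
      (durfeeShape_dual hshape).trace_eq⟩
    have := hshape.sum_dual_add_sum
    omega
  exact Nat.card_congr
    { toFun l := ⟨dual m q l, dual_mem (Nat.add_sub_cancel' hp) l.2⟩
      invFun l := ⟨dual m q l, dual_mem (Nat.sub_add_cancel hp) l.2⟩
      left_inv l := Subtype.ext (durfeeShape_of_trace_eq l.2.1 l.2.2.1 l.2.2.2.2).dual_dual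
      right_inv l := Subtype.ext (durfeeShape_of_trace_eq l.2.1 l.2.2.1 l.2.2.2.2).dual_dual }

end BoxPartition

/-- Palindrome duality: `part(p, k, n−k, q) = part(n·q − p, k, n−k, q)`. -/
theorem partCount_palindrome (n k p q : ℕ) (hk : k ≤ n) (hp : p ≤ n * q) :
    partCount p k (n - k) q = partCount (n * q - p) k (n - k) q := by
  have hn : q * (k + (n - k)) = n * q := by rw [Nat.add_sub_cancel' hk, mul_comm]
  rw [← hn] at hp ⊢
  exact BoxPartition.partCount_eq_partCount_sub hp
end

section
/- Let k, m, q, p ∈ ℕ with q ≤ k and q ≤ m. Then the number of partitions with k parts fitting in a k×m box, of size p and trace q, equals the sum over all pairs (a,b) ∈ ℕ×ℕ with q² + a + b = p of the product: (number of partitions with k−q parts fitting in a (k−q)×q box, of size a) × (number of partitions with q parts fitting in a q×(m−q) box, of size b). (Corner decomposition: a trace-q diagram is a q×q Durfee square together with a region to the north fitting in (k−q)×q and a region to the east fitting in q×(m−q).) -/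
/-!
For a monotone `l : Fin (c + q) → ℕ` the rows meeting the main diagonal form an up-set, so the
trace is `q` exactly when they are the last `q` rows, i.e. when the first `c` parts are at most
`q` and the last `q` parts are at least `q`. Removing the `q × q` Durfee square then splits a
trace-`q` partition of `p` in a `(c + q) × (q + d)` box into its first `c` parts, a partition in a
`c × q` box, and its last `q` parts lowered by `q`, a partition in a `q × d` box, whose sizes add
up to `p - q ^ 2`; gluing inverts this.
-/

open Finset

/-- Number of partitions with `k` parts fitting in a `k × m` box, of size `p`
and trace `t`. -/
noncomputable def partCountTrace (p k m t : ℕ) : ℕ :=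
  Nat.card {l : Fin k → ℕ // Monotone l ∧ (∀ i, l i ≤ m) ∧ (∑ i, l i) = p ∧
    (Finset.univ.filter (fun i : Fin k => k ≤ l i + (i : ℕ))).card = t}

/-- Number of partitions with `k` parts fitting in a `k × m` box, of size `p`. -/
noncomputable def partCountSize (p k m : ℕ) : ℕ :=
  Nat.card {l : Fin k → ℕ // Monotone l ∧ (∀ i, l i ≤ m) ∧ (∑ i, l i) = p}

theorem Finset.eq_of_isUpperSet_of_card_eq {α : Type*} [LinearOrder α] {s t : Finset α}
    (hs : IsUpperSet (s : Set α)) (ht : IsUpperSet (t : Set α)) (h : #s = #t) : s = t := by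
  rcases hs.total ht with hst | hts
  · exact eq_of_subset_of_card_le (coe_subset.1 hst) h.ge
  · exact (eq_of_subset_of_card_le (coe_subset.1 hts) h.le).symm

theorem Fin.card_filter_le_val (n m : ℕ) : #{i : Fin n | m ≤ (i : ℕ)} = n - m := by
  have hlt := Fin.card_filter_val_lt (n := n) (m := m)
  have := card_filter_add_card_filter_not (s := univ) fun i : Fin n => (i : ℕ) < m
  simp only [not_lt, card_univ, Fintype.card_fin] at this
  omega

theorem Fin.monotone_append {α : Type*} [Preorder α] {m n : ℕ} {f : Fin m → α} {g : Fin n → α}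
    (hf : Monotone f) (hg : Monotone g) (hfg : ∀ i j, f i ≤ g j) :
    Monotone (Fin.append f g) := by
  intro i j hij
  induction i using Fin.addCases with
  | left i =>
    induction j using Fin.addCases with
    | left j => simpa using hf ((strictMono_castAdd n).le_iff_le.1 hij)
    | right j => simpa using hfg i j
  | right i =>
    induction j using Fin.addCases with
    | left j => exact absurd (Fin.le_def.1 hij) (by simp; omega)
    | right j => simpa using hg ((strictMono_natAdd m).le_iff_le.1 hij)

theorem Fin.sum_append_add_const {m n : ℕ} (f : Fin m → ℕ) (g : Fin n → ℕ) (t : ℕ) :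
    ∑ i, Fin.append f (fun j => g j + t) i = ∑ i, f i + ∑ j, g j + n * t := by
  simp [Fin.sum_univ_add, sum_add_distrib, add_assoc]

theorem Fin.append_castAdd_natAdd_sub_add {m n t : ℕ} {l : Fin (m + n) → ℕ}
    (h : ∀ j, t ≤ l (Fin.natAdd m j)) :
    Fin.append (fun i => l (Fin.castAdd n i)) (fun j => l (Fin.natAdd m j) - t + t) = l := by
  simp only [Nat.sub_add_cancel (h _), Fin.append_castAdd_natAdd]

theorem Set.finite_monotone_bounded (k m : ℕ) :
    {f : Fin k → ℕ | Monotone f ∧ ∀ i, f i ≤ m}.Finite :=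
  (Set.finite_Iic fun _ => m).subset fun _ hf => hf.2

theorem Nat.card_subtype_prod_eq_sum {α β γ δ : Type*} {P : α → Prop} {Q : β → Prop}
    (hP : {x | P x}.Finite) (hQ : {y | Q y}.Finite) (u : α → γ) (v : β → δ)
    {R : γ → δ → Prop} {s : Finset (γ × δ)} (hs : ∀ a b, R a b ↔ (a, b) ∈ s) :
    Nat.card {xy : α × β // (P xy.1 ∧ Q xy.2) ∧ R (u xy.1) (v xy.2)} =
      ∑ ab ∈ s, Nat.card {x // P x ∧ u x = ab.1} * Nat.card {y // Q y ∧ v y = ab.2} := by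
  classical
  rw [Nat.subtype_card ((hP.toFinset ×ˢ hQ.toFinset).filter fun xy => (u xy.1, v xy.2) ∈ s)
      (by simp [hs])]
  refine (card_eq_sum_card_fiberwise fun _ hxy => (mem_filter.1 hxy).2).trans
    (sum_congr rfl fun ab hab => ?_)
  rw [Nat.subtype_card (hP.toFinset.filter (u · = ab.1)) (by simp),
    Nat.subtype_card (hQ.toFinset.filter (v · = ab.2)) (by simp), ← card_product]
  congr 1
  ext ⟨x, y⟩
  simp only [mem_filter, mem_product, Set.Finite.mem_toFinset, Set.mem_ofPred_eq, mem_coe]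
  constructor
  · rintro ⟨⟨⟨hx, hy⟩, -⟩, rfl⟩
    exact ⟨⟨hx, rfl⟩, hy, rfl⟩
  · rintro ⟨⟨hx, ha⟩, hy, hb⟩
    have hxy : (u x, v y) = ab := Prod.ext ha hb
    exact ⟨⟨⟨hx, hy⟩, hxy ▸ hab⟩, hxy⟩

theorem card_diag_eq_iff {c q : ℕ} {l : Fin (c + q) → ℕ} (hl : Monotone l) :
    #{i | c + q ≤ l i + i} = q ↔
      (∀ i, l (Fin.castAdd q i) ≤ q) ∧ ∀ j, q ≤ l (Fin.natAdd c j) := by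
  have hlast : #{i : Fin (c + q) | c ≤ (i : ℕ)} = q := by
    rw [Fin.card_filter_le_val, Nat.add_sub_cancel_left]
  have hS : IsUpperSet (({i | c + q ≤ l i + i} : Finset (Fin (c + q))) : Set (Fin (c + q))) := by
    intro i j (hij : (i : ℕ) ≤ j) hi
    simp only [coe_filter, mem_univ, true_and, Set.mem_ofPred_eq] at hi ⊢
    have := hl (Fin.le_def.2 hij)
    omega
  have hT : IsUpperSet (({i | c ≤ (i : ℕ)} : Finset (Fin (c + q))) : Set (Fin (c + q))) := by
    intro i j (hij : (i : ℕ) ≤ j) hi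
    simp only [coe_filter, mem_univ, true_and, Set.mem_ofPred_eq] at hi ⊢
    omega
  constructor
  · intro h
    have hdiag (i : Fin (c + q)) : c + q ≤ l i + i ↔ c ≤ i := by
      simpa using Finset.ext_iff.1 (eq_of_isUpperSet_of_card_eq hS hT (h.trans hlast.symm)) i
    refine ⟨fun i => ?_, fun j => ?_⟩
    · have hc : (i : ℕ) < c := i.isLt
      have h₀ := (hdiag ⟨c - 1, by omega⟩).not.2 (by simp; omega)
      have h₁ := hl (show Fin.castAdd q i ≤ ⟨c - 1, by omega⟩ from Fin.le_def.2 (by simp; omega))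
      simp only at h₀
      omega
    · have hq : (j : ℕ) < q := j.isLt
      have h₀ := (hdiag ⟨c, by omega⟩).2 le_rfl
      have h₁ := hl (show (⟨c, by omega⟩ : Fin (c + q)) ≤ Fin.natAdd c j from
        Fin.le_def.2 (by simp))
      simp only at h₀
      omega
  · rintro ⟨hleft, hright⟩
    rw [filter_congr (q := fun i : Fin (c + q) => c ≤ (i : ℕ)) fun i _ => ?_, hlast]
    induction i using Fin.addCases with
    | left i => have := hleft i; have := i.isLt; simp; omega
    | right j => have := hright j; simp; omega

def cornerEquiv (c q d p : ℕ) :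
    {l : Fin (c + q) → ℕ // Monotone l ∧ (∀ i, l i ≤ q + d) ∧ ∑ i, l i = p ∧
      #{i | c + q ≤ l i + i} = q} ≃
    {fg : (Fin c → ℕ) × (Fin q → ℕ) // ((Monotone fg.1 ∧ ∀ i, fg.1 i ≤ q) ∧
      (Monotone fg.2 ∧ ∀ j, fg.2 j ≤ d)) ∧ q ^ 2 + ∑ i, fg.1 i + ∑ j, fg.2 j = p} where
  toFun l := ⟨(fun i => l.1 (Fin.castAdd q i), fun j => l.1 (Fin.natAdd c j) - q), by
    obtain ⟨l, hl, hbox, hsum, htrace⟩ := l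
    obtain ⟨hleft, hright⟩ := (card_diag_eq_iff hl).1 htrace
    refine ⟨⟨⟨hl.comp (Fin.strictMono_castAdd q).monotone, hleft⟩,
      fun i j hij => Nat.sub_le_sub_right (hl ((Fin.strictMono_natAdd c).monotone hij)) q,
      fun j => by have := hbox (Fin.natAdd c j); simp only; omega⟩, ?_⟩
    have hsplit := Fin.sum_append_add_const (fun i => l (Fin.castAdd q i))
      (fun j => l (Fin.natAdd c j) - q) q
    rw [Fin.append_castAdd_natAdd_sub_add hright, hsum] at hsplit
    dsimp only
    linarith⟩
  invFun fg := ⟨Fin.append fg.1.1 (fun j => fg.1.2 j + q), by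
    obtain ⟨⟨f, g⟩, ⟨⟨hf, hfq⟩, hg, hgd⟩, hsum⟩ := fg
    have hmono : Monotone (Fin.append f fun j => g j + q) :=
      Fin.monotone_append hf (fun i j hij => Nat.add_le_add_right (hg hij) q)
        fun i j => (hfq i).trans (Nat.le_add_left q (g j))
    dsimp only at *
    refine ⟨hmono, fun i => ?_, ?_, ?_⟩
    · induction i using Fin.addCases with
      | left i => simpa using (hfq i).trans (Nat.le_add_right q d)
      | right j => simpa [add_comm q] using hgd j
    · rw [Fin.sum_append_add_const, ← hsum]
      ring
    · exact (card_diag_eq_iff hmono).2 ⟨by simpa using hfq, by simp⟩⟩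
  left_inv l := Subtype.ext <|
    Fin.append_castAdd_natAdd_sub_add ((card_diag_eq_iff l.2.1).1 l.2.2.2.2).2
  right_inv fg := by
    ext i <;> simp

/-- Durfee-square (corner) decomposition of trace-`q` partitions in a `k × m` box. -/
theorem partCountTrace_corner_decomposition (k m q p : ℕ) (hqk : q ≤ k) (hqm : q ≤ m) :
    partCountTrace p k m q =
      ∑ ab ∈ (Finset.range (p + 1) ×ˢ Finset.range (p + 1)).filter
          (fun ab => q ^ 2 + ab.1 + ab.2 = p),
        partCountSize ab.1 (k - q) q * partCountSize ab.2 q (m - q) := by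
  obtain ⟨c, rfl⟩ := Nat.exists_eq_add_of_le' hqk
  obtain ⟨d, rfl⟩ := Nat.exists_eq_add_of_le hqm
  have hs (a b : ℕ) : q ^ 2 + a + b = p ↔
      (a, b) ∈ (range (p + 1) ×ˢ range (p + 1)).filter (fun ab => q ^ 2 + ab.1 + ab.2 = p) := by
    simp only [mem_filter, mem_product, mem_range]
    omega
  rw [Nat.add_sub_cancel, Nat.add_sub_cancel_left, partCountTrace,
    Nat.card_congr (cornerEquiv c q d p)]
  refine (Nat.card_subtype_prod_eq_sum (Set.finite_monotone_bounded c q)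
    (Set.finite_monotone_bounded q d) (fun f => ∑ i, f i) (fun g => ∑ j, g j) hs).trans ?_
  simp only [partCountSize, and_assoc]
end

section
/- Let n, k ∈ ℕ with 1 ≤ k ≤ n and let λ be a partition with k parts fitting in a k×(n−k) box, with jump set J(λ) ⊆ {1,…,n}. Then ∑_{b ∈ J(λ)} card {a ∈ {1,…,n} | a < b, a ∉ J(λ), and exactly one of a = k, b = k holds} = trace(λ). (This is the combinatorial content of the lemma that, for the Schubert cell structure on Gr_k(ℝ^{n,1}) coming from the decomposition with the single sign representation in position k, the weight of the Schubert cell Ω_λ equals the trace of λ.) -/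
/-!
Only the jump set `J ⊆ {1,…,n}`, a `k`-element set, matters. If `k ∉ J`, a pair `(a, b)` counts
exactly when `a = k < b`, so the weight is `#{b ∈ J | k < b}`. If `k ∈ J`, only `b = k` contributes,
with the `k - 1 - #{b ∈ J | b < k}` non-jumps below `k`; as `#J = k` this is again
`#{b ∈ J | k < b}`. Finally `b = λ i + i + 1 > k` iff `i` lies on the diagonal, i.e. `k ≤ λ i + i`.
-/

open Finset

def schubertWeight (n k : ℕ) (J : Finset ℕ) : ℕ :=
  ∑ b ∈ J, #{a ∈ Icc 1 n | a < b ∧ a ∉ J ∧ Xor (a = k) (b = k)}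

def jumpSet {k : ℕ} (l : Fin k → ℕ) : Finset ℕ :=
  univ.image fun i : Fin k => l i + i + 1

section SchubertWeight

variable {n k : ℕ} {J : Finset ℕ}

theorem schubertWeight_of_notMem (hk : k ∈ Icc 1 n) (hkJ : k ∉ J) :
    schubertWeight n k J = #{b ∈ J | k < b} := by
  rw [schubertWeight, card_filter]
  refine sum_congr rfl fun b hb => ?_
  have hbk : b ≠ k := by rintro rfl; exact hkJ hb
  have hterm : {a ∈ Icc 1 n | a < b ∧ a ∉ J ∧ Xor (a = k) (b = k)} =
      ({k} : Finset ℕ).filter (· < b) := by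
    ext a
    simp only [mem_filter, mem_singleton, xor_iff_iff_not, hbk, not_false_eq_true, iff_true]
    constructor
    · rintro ⟨-, hab, -, rfl⟩
      exact ⟨rfl, hab⟩
    · rintro ⟨rfl, hab⟩
      exact ⟨hk, hab, hkJ, rfl⟩
  rw [hterm, filter_singleton]
  split_ifs <;> rfl

theorem schubertWeight_of_mem (hJ : J ⊆ Icc 1 n) (hkJ : k ∈ J) :
    schubertWeight n k J = k - 1 - #{b ∈ J | b < k} := by
  have hkn : k ≤ n := (mem_Icc.1 (hJ hkJ)).2
  rw [schubertWeight, sum_eq_single_of_mem k hkJ]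
  · have hnonjumps : {a ∈ Icc 1 n | a < k ∧ a ∉ J ∧ Xor (a = k) (k = k)} = Ico 1 k \ J := by
      ext a
      simp only [mem_filter, mem_sdiff, mem_Icc, mem_Ico, xor_iff_iff_not, not_true_eq_false,
        iff_false]
      grind
    have hjumps : J ∩ Ico 1 k = {b ∈ J | b < k} := by
      ext b
      simp only [mem_inter, mem_filter, mem_Ico, and_congr_right_iff]
      intro hb
      have := (mem_Icc.1 (hJ hb)).1
      omega
    rw [hnonjumps, card_sdiff, ← hjumps, Nat.card_Ico]
  · intro b _ hbk
    rw [card_eq_zero, filter_eq_empty_iff]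
    rintro a - ⟨-, haJ, (⟨rfl, -⟩ | ⟨rfl, -⟩)⟩
    · exact haJ hkJ
    · exact hbk rfl

theorem card_filter_gt_add_card_filter_lt_of_mem (hkJ : k ∈ J) :
    #{b ∈ J | k < b} + #{b ∈ J | b < k} + 1 = #J := by
  have hsplit : J.erase k = {b ∈ J | k < b} ∪ {b ∈ J | b < k} := by
    ext b
    simp only [mem_erase, mem_union, mem_filter]
    grind
  rw [← card_union_of_disjoint (disjoint_filter.2 fun _ _ h => h.asymm), ← hsplit,
    card_erase_add_one hkJ]

theorem schubertWeight_eq_card_filter_gt (hJ : J ⊆ Icc 1 n) (hcard : #J = k)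
    (hk : k ∈ Icc 1 n) : schubertWeight n k J = #{b ∈ J | k < b} := by
  by_cases hkJ : k ∈ J
  · have := card_filter_gt_add_card_filter_lt_of_mem hkJ
    rw [schubertWeight_of_mem hJ hkJ]
    omega
  · exact schubertWeight_of_notMem hk hkJ

end SchubertWeight

section JumpSet

variable {n k : ℕ} {l : Fin k → ℕ}

theorem strictMono_jump (hmono : Monotone l) : StrictMono fun i : Fin k => l i + i + 1 :=
  (hmono.add_strictMono Fin.val_strictMono).add_const 1

theorem card_jumpSet (hmono : Monotone l) : #(jumpSet l) = k := by
  rw [jumpSet, card_image_of_injective _ (strictMono_jump hmono).injective, card_univ,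
    Fintype.card_fin]

theorem jumpSet_subset_Icc (hkn : k ≤ n) (hfit : ∀ i, l i ≤ n - k) : jumpSet l ⊆ Icc 1 n := by
  intro b hb
  obtain ⟨i, -, rfl⟩ := mem_image.1 hb
  have := hfit i
  have := i.isLt
  simp only [mem_Icc]
  omega

theorem card_filter_gt_jumpSet (hmono : Monotone l) :
    #{b ∈ jumpSet l | k < b} = #{i | k ≤ l i + i} := by
  rw [jumpSet, filter_image, card_image_of_injective _ (strictMono_jump hmono).injective]
  congr 1
  ext i
  simp only [mem_filter, mem_univ, true_and]
  omega

end JumpSet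

/-- The weight of the Schubert cell `Ω_λ` in the construction of `Gr_k(ℝ^{n,1})`
having the single sign representation in position `k` equals the trace of `λ`. -/
theorem schubert_weight_eq_trace (n k : ℕ) (hk1 : 1 ≤ k) (hkn : k ≤ n)
    (l : Fin k → ℕ) (hmono : Monotone l) (hfit : ∀ i, l i ≤ n - k) :
    (∑ b ∈ Finset.image (fun i : Fin k => l i + (i : ℕ) + 1) Finset.univ,
        ((Finset.Icc 1 n).filter (fun a =>
          a < b ∧ a ∉ Finset.image (fun i : Fin k => l i + (i : ℕ) + 1) Finset.univ ∧
          Xor (a = k) (b = k))).card)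
      = (Finset.univ.filter (fun i : Fin k => k ≤ l i + (i : ℕ))).card := by
  change schubertWeight n k (jumpSet l) = _
  rw [schubertWeight_eq_card_filter_gt (jumpSet_subset_Icc hkn hfit) (card_jumpSet hmono)
    (mem_Icc.2 ⟨hk1, hkn⟩), card_filter_gt_jumpSet hmono]
end

section
/- Let k ∈ ℕ and let α, β : Fin k → ℕ be monotone (weakly increasing) with α i ≤ β i for all i. Then trace(α) ≤ trace(β), and (∑ i, α i) + trace(β) ≤ (∑ i, β i) + trace(α). (Equivalently, adding boxes to a Young diagram can only increase the trace, and each added box increases the trace by at most one; this is the combinatorial content of the lemma that all differentials vanish in the cellular spectral sequence for Gr_k(ℝ^{n,1}) with the standard decomposition.) -/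
open Finset

section ThresholdCount

variable {ι : Type*} (s : Finset ι) (t : ι → ℕ) {f g : ι → ℕ}

theorem card_filter_le_mono (hfg : ∀ i ∈ s, f i ≤ g i) :
    #{i ∈ s | t i ≤ f i} ≤ #{i ∈ s | t i ≤ g i} :=
  card_le_card <| monotone_filter_right s fun i hi hf => hf.trans (hfg i hi)

/-- An index that reaches its threshold under `g` but not under `f` has `1 ≤ g i - f i`. -/
theorem card_filter_le_le_add_sum_tsub :
    #{i ∈ s | t i ≤ g i} ≤ #{i ∈ s | t i ≤ f i} + ∑ i ∈ s, (g i - f i) := by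
  classical
  set A := {i ∈ s | t i ≤ f i}
  set B := {i ∈ s | t i ≤ g i}
  have hgained : #(B \ A) ≤ ∑ i ∈ s, (g i - f i) :=
    calc #(B \ A) = ∑ _i ∈ B \ A, 1 := card_eq_sum_ones _
      _ ≤ ∑ i ∈ B \ A, (g i - f i) := sum_le_sum fun i hi => by
          simp only [A, B, mem_sdiff, mem_filter, not_and, not_le] at hi
          have := hi.2 hi.1.1
          omega
      _ ≤ ∑ i ∈ s, (g i - f i) :=
          sum_le_sum_of_subset (sdiff_subset.trans (filter_subset _ _))
  calc #B ≤ #(B \ A) + #A := card_le_card_sdiff_add_card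
    _ ≤ #A + ∑ i ∈ s, (g i - f i) := by omega

end ThresholdCount

theorem trace_monotone_and_shift_general (k : ℕ) (α β : Fin k → ℕ)
    (h : ∀ i, α i ≤ β i) :
    (Finset.univ.filter (fun i : Fin k => k ≤ α i + (i : ℕ))).card
        ≤ (Finset.univ.filter (fun i : Fin k => k ≤ β i + (i : ℕ))).card ∧
    (∑ i, α i) + (Finset.univ.filter (fun i : Fin k => k ≤ β i + (i : ℕ))).card
        ≤ (∑ i, β i) + (Finset.univ.filter (fun i : Fin k => k ≤ α i + (i : ℕ))).card := by
  have hshift : ∀ i ∈ univ, α i + (i : ℕ) ≤ β i + i := fun i _ => Nat.add_le_add_right (h i) _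
  refine ⟨card_filter_le_mono univ (fun _ => k) hshift, ?_⟩
  have hgain := card_filter_le_le_add_sum_tsub univ (fun _ => k)
    (f := fun i : Fin k => α i + i) (g := fun i => β i + i)
  have hdiff : ∑ i, ((β i + i) - (α i + i)) = ∑ i, β i - ∑ i, α i := by
    simp only [Nat.add_sub_add_right]
    exact sum_tsub_distrib univ fun i _ => h i
  have hsum : ∑ i, α i ≤ ∑ i, β i := sum_le_sum fun i _ => h i
  omega

/-- Adding boxes to a Young diagram can only increase the trace, and each added box
increases the trace by at most one. -/
theorem trace_monotone_and_shift (k : ℕ) (α β : Fin k → ℕ)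
    (hα : Monotone α) (hβ : Monotone β) (h : ∀ i, α i ≤ β i) :
    (Finset.univ.filter (fun i : Fin k => k ≤ α i + (i : ℕ))).card
        ≤ (Finset.univ.filter (fun i : Fin k => k ≤ β i + (i : ℕ))).card ∧
    (∑ i, α i) + (Finset.univ.filter (fun i : Fin k => k ≤ β i + (i : ℕ))).card
        ≤ (∑ i, β i) + (Finset.univ.filter (fun i : Fin k => k ≤ α i + (i : ℕ))).card :=
  trace_monotone_and_shift_general k α β h
end

section
/- Let n, k ∈ ℕ with k ≤ n and let λ be a partition with k parts whose jump set J(λ) is contained in {1,…,n}. Let H = {1,…,n} \ J(λ), a set of n−k elements, and let h : Fin (n−k) → ℕ enumerate H in increasing order (so h(i) is the (i+1)-st smallest element of H, 0-indexed). Then for every i : Fin (n−k), card {j : Fin k | λ j + j + 1 > h i} = card {j : Fin k | λ j > i}. -/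
/-!
Let `t m = #{j | λ j ≤ m}`. Since `λ` is monotone, `λ j ≤ m ↔ j < t m`, so comparing
`λ j + j` with `m + t m` is the same as comparing `λ j` with `m`, and the two are never equal.
Hence `m ↦ m + t m + 1` is a strictly increasing map from `Fin (n - k)` into the complement
`H` of the jump set, i.e. it is the increasing enumeration `h` of `H`, and
`h i < λ j + j + 1 ↔ i < λ j`.
-/

open Finset

section numLE

variable {α : Type*} [LinearOrder α] {k : ℕ} {l : Fin k → α}

def numLE (l : Fin k → α) (m : α) : ℕ := #{j | l j ≤ m}

theorem numLE_mono : Monotone (numLE l) := fun _ _ hab =>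
  card_le_card <| monotone_filter_right _ fun _ _ h => h.trans hab

theorem numLE_le (m : α) : numLE l m ≤ k :=
  (card_filter_le _ _).trans_eq (Fintype.card_fin k)

theorem Monotone.le_iff_lt_numLE (hl : Monotone l) {m : α} {j : Fin k} :
    l j ≤ m ↔ (j : ℕ) < numLE l m := by
  unfold numLE
  constructor
  · intro hj
    have hsub : Iic j ⊆ ({a | l a ≤ m} : Finset (Fin k)) := fun a ha =>
      mem_filter.2 ⟨mem_univ a, (hl (mem_Iic.1 ha)).trans hj⟩
    simpa using card_le_card hsub
  · intro hj
    by_contra! hm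
    have hsub : ({a | l a ≤ m} : Finset (Fin k)) ⊆ Iio j := fun a ha => by
      refine mem_Iio.2 (lt_of_not_ge fun hja => ?_)
      exact (mem_filter.1 ha).2.not_gt (hm.trans_le (hl hja))
    exact (card_le_card hsub).not_gt (by simpa using hj)

theorem Monotone.numLE_le_iff_lt (hl : Monotone l) {m : α} {j : Fin k} :
    numLE l m ≤ (j : ℕ) ↔ m < l j := by
  rw [← not_lt, ← hl.le_iff_lt_numLE, not_le]

end numLE

section jumpComplement

variable {k : ℕ} {l : Fin k → ℕ}

theorem Monotone.add_numLE_lt_iff (hl : Monotone l) {m : ℕ} {j : Fin k} :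
    m + numLE l m < l j + j ↔ m < l j := by
  rcases lt_or_ge m (l j) with hlt | hle
  · have := hl.numLE_le_iff_lt.2 hlt
    omega
  · have := hl.le_iff_lt_numLE.1 hle
    omega

theorem Monotone.add_ne_add_numLE (hl : Monotone l) (m : ℕ) (j : Fin k) :
    l j + j ≠ m + numLE l m := by
  rcases lt_or_ge m (l j) with hlt | hle
  · have := hl.add_numLE_lt_iff.2 hlt
    omega
  · have := hl.le_iff_lt_numLE.1 hle
    omega

theorem strictMono_add_numLE_add_one : StrictMono fun m => m + numLE l m + 1 := by
  intro a b hab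
  have := numLE_mono (l := l) hab.le
  dsimp only
  omega

theorem Monotone.add_numLE_add_one_mem_jumpComplement (hl : Monotone l) {n m : ℕ}
    (hm : m < n - k) :
    m + numLE l m + 1 ∈ Icc 1 n \ image (fun i : Fin k => l i + (i : ℕ) + 1) univ := by
  have := numLE_le (l := l) m
  simp only [mem_sdiff, mem_Icc, mem_image, mem_univ, true_and, not_exists]
  exact ⟨by omega, fun j hj => hl.add_ne_add_numLE m j (by omega)⟩

end jumpComplement

theorem jump_complement_counting_general (n k : ℕ) (l : Fin k → ℕ)
    (hmono : Monotone l)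
    (H : Finset ℕ)
    (hH : H = Finset.Icc 1 n \ Finset.image (fun i : Fin k => l i + (i : ℕ) + 1) Finset.univ)
    (hcard : H.card = n - k) :
    ∀ i : Fin (n - k),
      (Finset.univ.filter
          (fun j : Fin k => ((H.orderIsoOfFin hcard i : ℕ)) < l j + (j : ℕ) + 1)).card
        = (Finset.univ.filter (fun j : Fin k => (i : ℕ) < l j)).card := by
  intro i
  have henum : (fun i : Fin (n - k) => (i : ℕ) + numLE l i + 1) = H.orderEmbOfFin hcard :=
    orderEmbOfFin_unique hcard
      (fun i => hH ▸ hmono.add_numLE_add_one_mem_jumpComplement i.isLt)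
      (strictMono_add_numLE_add_one.comp Fin.val_strictMono)
  have hval : (H.orderIsoOfFin hcard i : ℕ) = i + numLE l i + 1 := by
    rw [coe_orderIsoOfFin_apply, ← henum]
  simp_rw [hval, add_lt_add_iff_right, hmono.add_numLE_lt_iff]

/-- The key counting identity (Lemma `bijectionlemma` of the paper): if `H` enumerates
the complement of the jump set of `λ` in `{1,…,n}` in increasing order via `h`, then
for every `i`, `#{j : λ_j + j + 1 > h i} = #{j : λ_j > i}`. -/
theorem jump_complement_counting (n k : ℕ) (hk : k ≤ n) (l : Fin k → ℕ)
    (hmono : Monotone l) (hfit : ∀ i : Fin k, l i + (i : ℕ) + 1 ≤ n)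
    (H : Finset ℕ)
    (hH : H = Finset.Icc 1 n \ Finset.image (fun i : Fin k => l i + (i : ℕ) + 1) Finset.univ)
    (hcard : H.card = n - k) :
    ∀ i : Fin (n - k),
      (Finset.univ.filter
          (fun j : Fin k => ((H.orderIsoOfFin hcard i : ℕ)) < l j + (j : ℕ) + 1)).card
        = (Finset.univ.filter (fun j : Fin k => (i : ℕ) < l j)).card :=
  jump_complement_counting_general n k l hmono H hH hcard
end

section
/- Let n, k ∈ ℕ with k ≤ n and let λ be a partition with k parts whose jump set J(λ) is contained in {1,…,n}, and let H = {1,…,n} \ J(λ). Then for every j : Fin k, the number of elements of H that are strictly less than λ j + j + 1 equals λ j. -/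
open Finset

/-!
The jumps `λ i + i + 1` are strictly increasing in `i`, so exactly `j` of them lie below the
`j`-th jump `λ j + j + 1`, and all of them lie in `{1, …, n}`. Hence among the `λ j + j`
elements `1, …, λ j + j` of `{1, …, n}`, exactly `j` are jumps and the other `λ j` lie in `H`.
-/

theorem Finset.filter_sdiff_eq {α : Type*} [DecidableEq α] (s t : Finset α) (p : α → Prop)
    [DecidablePred p] : (s \ t).filter p = s.filter p \ t.filter p := by
  ext
  simp only [mem_filter, mem_sdiff]
  tauto

theorem StrictMono.filter_image_lt {α β : Type*} [LinearOrder α] [LinearOrder β] {f : α → β}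
    (hf : StrictMono f) (s : Finset α) (a : α) :
    (s.image f).filter (· < f a) = (s.filter (· < a)).image f := by
  simp only [filter_image, hf.lt_iff_lt]

theorem StrictMono.card_filter_image_univ_lt {k : ℕ} {β : Type*} [LinearOrder β]
    {f : Fin k → β} (hf : StrictMono f) (j : Fin k) :
    #((univ.image f).filter (· < f j)) = j := by
  rw [hf.filter_image_lt, card_image_of_injective _ hf.injective, filter_gt_eq_Iio, Fin.card_Iio]

theorem Monotone.strictMono_add_val {k : ℕ} {l : Fin k → ℕ} (hl : Monotone l) (c : ℕ) :
    StrictMono fun i : Fin k => l i + i + c := by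
  intro i i' hi
  dsimp only
  have := hl hi.le
  have : (i : ℕ) < i' := hi
  omega

theorem jump_complement_below_count_general (n k : ℕ) (l : Fin k → ℕ)
    (hmono : Monotone l) (hfit : ∀ i : Fin k, l i + (i : ℕ) + 1 ≤ n) :
    ∀ j : Fin k,
      ((Finset.Icc 1 n \
          Finset.image (fun i : Fin k => l i + (i : ℕ) + 1) Finset.univ).filter
        (fun a => a < l j + (j : ℕ) + 1)).card = l j := by
  intro j
  have hJ : univ.image (fun i : Fin k => l i + (i : ℕ) + 1) ⊆ Icc 1 n := by
    intro x hx
    obtain ⟨i, -, rfl⟩ := mem_image.mp hx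
    exact mem_Icc.mpr ⟨by omega, hfit i⟩
  have hbelow : (Icc 1 n).filter (· < l j + (j : ℕ) + 1) = Ico 1 (l j + j + 1) := by
    rw [← Finset.Ico_add_one_right_eq_Icc, Ico_filter_lt, min_eq_right (by have := hfit j; omega)]
  rw [filter_sdiff_eq, card_sdiff_of_subset (filter_subset_filter _ hJ), hbelow, Nat.card_Ico,
    (hmono.strictMono_add_val 1).card_filter_image_univ_lt]
  omega

/-- The number of elements of the complement `H` of the jump set that are strictly
below the `j`-th jump `λ_j + j + 1` equals `λ_j`. -/
theorem jump_complement_below_count (n k : ℕ) (hk : k ≤ n) (l : Fin k → ℕ)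
    (hmono : Monotone l) (hfit : ∀ i : Fin k, l i + (i : ℕ) + 1 ≤ n) :
    ∀ j : Fin k,
      ((Finset.Icc 1 n \
          Finset.image (fun i : Fin k => l i + (i : ℕ) + 1) Finset.univ).filter
        (fun a => a < l j + (j : ℕ) + 1)).card = l j :=
  jump_complement_below_count_general n k l hmono hfit
end

section
/- The perpendicular complement map sends Schubert cells to reverse-flag Schubert cells of the transpose partition: let n, k ∈ ℕ with k ≤ n, let λ be a partition with k parts fitting in a k×(n−k) box, with transpose λᵀ, and let V be a linear subspace of EuclideanSpace ℝ (Fin n) with finrank V = k. Then [for all m ≤ n, finrank (V ⊓ F_m) = card {i : Fin k | λ i + i + 1 ≤ m}] if and only if [for all m ≤ n, finrank (Vᗮ ⊓ Ĝ_m) = card {i : Fin (n−k) | λᵀ i + i + 1 ≤ m}]. -/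
/-! Since `Ĝ_m = F_{n-m}ᗮ`, the dimension formula for `V ⊔ F_{n-m}` gives
`dim (Vᗮ ⊓ Ĝ_m) + k + (n - m) = n + dim (V ⊓ F_{n-m})`, so the theorem reduces to the same
identity between the counting functions of `λ` and `λᵀ`. That identity holds because the sets
`{λ j + j}` and `{n - 1 - (λᵀ i + i)}` partition `{0, …, n - 1}`: they record the two kinds of
steps along the boundary of the Young diagram of `λ` inside the `k × (n - k)` box. -/

open Finset

/-- `Fflag n m` is the span of the first `m` standard basis vectors
`e_0, …, e_{m-1}` of `ℝⁿ`. -/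
noncomputable def Fflag (n m : ℕ) : Submodule ℝ (EuclideanSpace ℝ (Fin n)) :=
  Submodule.span ℝ ((fun i : Fin n => EuclideanSpace.single i (1 : ℝ)) '' {i | (i : ℕ) < m})

/-- `Gflag n m` is the span of the last `m` standard basis vectors
`e_{n-m}, …, e_{n-1}` of `ℝⁿ`. -/
noncomputable def Gflag (n m : ℕ) : Submodule ℝ (EuclideanSpace ℝ (Fin n)) :=
  Submodule.span ℝ ((fun i : Fin n => EuclideanSpace.single i (1 : ℝ)) '' {i | n - m ≤ (i : ℕ)})

section LinearAlgebra

open Module Submodule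

variable {ι 𝕜 E : Type*} [Fintype ι] [RCLike 𝕜] [NormedAddCommGroup E] [InnerProductSpace 𝕜 E]

theorem OrthonormalBasis.finrank_span_image (b : OrthonormalBasis ι 𝕜 E) (s : Set ι) [Fintype s] :
    finrank 𝕜 (span 𝕜 (b '' s)) = Fintype.card s := by
  rw [Set.image_eq_range]
  exact finrank_span_eq_card (b.toBasis.linearIndependent.comp _ Subtype.val_injective)

theorem OrthonormalBasis.orthogonal_span_image (b : OrthonormalBasis ι 𝕜 E) (s : Set ι) :
    (span 𝕜 (b '' s))ᗮ = span 𝕜 (b '' sᶜ) := by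
  classical
  have := b.toBasis.finiteDimensional_of_finite
  refine (eq_of_le_of_finrank_eq ?_ ?_).symm
  · rw [← isOrtho_iff_le, isOrtho_span]
    rintro _ ⟨i, hi, rfl⟩ _ ⟨j, hj, rfl⟩
    exact b.orthonormal.inner_eq_zero (ne_of_mem_of_not_mem hj hi).symm
  · have := (span 𝕜 (b '' s)).finrank_add_finrank_orthogonal
    rw [b.finrank_span_image, finrank_eq_card_basis b.toBasis] at this
    rw [b.finrank_span_image, Fintype.card_compl_set]
    omega

omit [Fintype ι] in
theorem Submodule.finrank_inf_orthogonal_add [FiniteDimensional 𝕜 E] (V W : Submodule 𝕜 E) :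
    finrank 𝕜 ↥(Vᗮ ⊓ Wᗮ) + finrank 𝕜 V + finrank 𝕜 W = finrank 𝕜 E + finrank 𝕜 ↥(V ⊓ W) := by
  have := (V ⊔ W).finrank_add_finrank_orthogonal
  have := finrank_sup_add_finrank_inf_eq V W
  rw [inf_orthogonal]
  omega

theorem Fflag_eq_span_basisFun (n m : ℕ) :
    Fflag n m = span ℝ (EuclideanSpace.basisFun (Fin n) ℝ '' {i | (i : ℕ) < m}) := by
  simp only [Fflag, EuclideanSpace.basisFun_apply]

theorem finrank_Fflag {n m : ℕ} (hm : m ≤ n) : finrank ℝ (Fflag n m) = m := by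
  rw [Fflag_eq_span_basisFun, OrthonormalBasis.finrank_span_image]
  exact Fintype.card_fin_lt_of_le hm

theorem Gflag_eq_orthogonal_Fflag (n m : ℕ) : Gflag n m = (Fflag n (n - m))ᗮ := by
  rw [Fflag_eq_span_basisFun, OrthonormalBasis.orthogonal_span_image]
  simp only [Gflag, EuclideanSpace.basisFun_apply, Set.compl_ofPred, not_lt]

end LinearAlgebra

theorem Fin.le_card_filter_add_iff_of_monotone {k : ℕ} {p : Fin k → Prop} [DecidablePred p]
    (hp : Monotone p) (j : Fin k) : k ≤ #{i | p i} + j ↔ p j := by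
  constructor
  · intro h
    by_contra hj
    have hsub : ({i | p i} : Finset (Fin k)) ⊆ Ioi j := fun i hi ↦
      mem_Ioi.mpr (lt_of_not_ge fun hij ↦ hj (hp hij (mem_filter.mp hi).2))
    have := card_le_card hsub
    rw [Fin.card_Ioi] at this
    omega
  · intro hj
    have hsub : Ici j ⊆ ({i | p i} : Finset (Fin k)) := fun i hi ↦
      mem_filter.mpr ⟨mem_univ i, hp (mem_Ici.mp hi) hj⟩
    have := card_le_card hsub
    rw [Fin.card_Ici] at this
    omega

theorem Finset.card_filter_lt_add_card_filter_lt {S R : Finset ℕ} {N p : ℕ} (hdisj : Disjoint S R)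
    (hunion : S ∪ R = range N) (hp : p ≤ N) : #{x ∈ S | x < p} + #{x ∈ R | x < p} = p := by
  rw [← card_union_of_disjoint (disjoint_filter_filter hdisj), ← filter_union, hunion]
  have : {x ∈ range N | x < p} = range p := by
    ext x
    simp only [mem_filter, mem_range]
    omega
  rw [this, card_range]

section TransposePartition

variable {k a : ℕ} {l : Fin k → ℕ}

def transposePartition (a : ℕ) (l : Fin k → ℕ) (i : Fin a) : ℕ := #{j | a < l j + i + 1}

theorem le_transposePartition_add_iff (hmono : Monotone l) (i : Fin a) (j : Fin k) :
    k ≤ transposePartition a l i + j ↔ a < l j + i + 1 :=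
  Fin.le_card_filter_add_iff_of_monotone (fun j j' h hj ↦ by have := hmono h; omega) j

theorem transposePartition_le (i : Fin a) : transposePartition a l i ≤ k :=
  (card_filter_le _ _).trans_eq (card_fin k)

theorem monotone_transposePartition : Monotone (transposePartition a l) := fun i i' h ↦
  card_le_card <| monotone_filter_right _ fun j hj ↦ by simp only [Fin.le_def] at h; omega

theorem strictMono_transposePartition_add_val :
    StrictMono fun i : Fin a ↦ transposePartition a l i + i :=
  monotone_transposePartition.add_strictMono Fin.val_strictMono

theorem injective_reflect_transposePartition_add_val :
    Function.Injective fun i : Fin a ↦ k + a - 1 - (transposePartition a l i + i) := by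
  intro i i' h
  have := transposePartition_le (l := l) i
  have := transposePartition_le (l := l) i'
  exact (strictMono_transposePartition_add_val (l := l)).injective (by dsimp only at h ⊢; omega)

-- `λ j + i ≥ a` iff `λᵀ i + j ≥ k`, so `(λ j + j) + (λᵀ i + i)` is never exactly `k + a - 1`.
theorem disjoint_image_add_val_image_reflect (hmono : Monotone l) :
    Disjoint (univ.image fun j : Fin k ↦ l j + j)
      (univ.image fun i : Fin a ↦ k + a - 1 - (transposePartition a l i + i)) := by
  simp only [disjoint_left, mem_image, mem_univ, true_and, not_exists]
  rintro _ ⟨j, rfl⟩ i h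
  have := le_transposePartition_add_iff hmono i j
  have := transposePartition_le (l := l) i
  have := j.isLt
  have := i.isLt
  omega

theorem image_add_val_union_image_reflect (hmono : Monotone l) (hfit : ∀ j, l j ≤ a) :
    (univ.image fun j : Fin k ↦ l j + j) ∪
      (univ.image fun i : Fin a ↦ k + a - 1 - (transposePartition a l i + i)) = range (k + a) := by
  refine eq_of_subset_of_card_le ?_ ?_
  · intro x
    simp only [mem_union, mem_image, mem_univ, true_and, mem_range]
    rintro (⟨j, rfl⟩ | ⟨i, rfl⟩)
    · have := hfit j
      have := j.isLt
      omega
    · have := i.isLt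
      omega
  · rw [card_range, card_union_of_disjoint (disjoint_image_add_val_image_reflect hmono),
      card_image_of_injective _ (hmono.add_strictMono Fin.val_strictMono).injective,
      card_image_of_injective _ injective_reflect_transposePartition_add_val,
      card_univ, card_univ, Fintype.card_fin, Fintype.card_fin]

theorem card_filter_transposePartition_add (hmono : Monotone l) (hfit : ∀ j, l j ≤ a) {m : ℕ}
    (hm : m ≤ k + a) :
    #{i : Fin a | transposePartition a l i + i + 1 ≤ m} + (k + a - m)
      = a + #{j : Fin k | l j + j + 1 ≤ k + a - m} := by
  set S := univ.image fun j : Fin k ↦ l j + j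
  set R := univ.image fun i : Fin a ↦ k + a - 1 - (transposePartition a l i + i)
  have hS : #{j : Fin k | l j + j + 1 ≤ k + a - m} = #{x ∈ S | x < k + a - m} := by
    rw [filter_image, card_image_of_injective _ (hmono.add_strictMono Fin.val_strictMono).injective]
    rfl
  have hR : #{i : Fin a | transposePartition a l i + i + 1 ≤ m} = #{x ∈ R | ¬x < k + a - m} := by
    rw [filter_image, card_image_of_injective _ injective_reflect_transposePartition_add_val]
    congr 1
    refine filter_congr fun i _ ↦ ?_
    have := transposePartition_le (l := l) i
    have := i.isLt
    omega
  have hcard : #R = a := by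
    rw [card_image_of_injective _ injective_reflect_transposePartition_add_val, card_univ,
      Fintype.card_fin]
  have hlow : #{x ∈ S | x < k + a - m} + #{x ∈ R | x < k + a - m} = k + a - m :=
    card_filter_lt_add_card_filter_lt (disjoint_image_add_val_image_reflect hmono)
      (image_add_val_union_image_reflect hmono hfit) (Nat.sub_le (k + a) m)
  have hsplit := card_filter_add_card_filter_not (s := R) (· < k + a - m)
  omega

end TransposePartition

/-- The perpendicular complement map sends the Schubert cell of `λ` (with respect to
the standard flag) to the reverse-flag Schubert cell of the transpose `λᵀ`. -/
theorem perp_schubert (n k : ℕ) (hk : k ≤ n) (l : Fin k → ℕ)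
    (hmono : Monotone l) (hfit : ∀ i, l i ≤ n - k)
    (lT : Fin (n - k) → ℕ)
    (hlT : ∀ i, lT i
      = (Finset.univ.filter (fun j : Fin k => n - k < l j + (i : ℕ) + 1)).card)
    (V : Submodule ℝ (EuclideanSpace ℝ (Fin n)))
    (hV : Module.finrank ℝ V = k) :
    (∀ m ≤ n, Module.finrank ℝ ↥(V ⊓ Fflag n m)
        = (Finset.univ.filter (fun i : Fin k => l i + (i : ℕ) + 1 ≤ m)).card)
      ↔ (∀ m ≤ n, Module.finrank ℝ ↥(Vᗮ ⊓ Gflag n m)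
        = (Finset.univ.filter (fun i : Fin (n - k) => lT i + (i : ℕ) + 1 ≤ m)).card) := by
  obtain rfl : lT = transposePartition (n - k) l := funext hlT
  have hcell : ∀ m ≤ n, (Module.finrank ℝ ↥(Vᗮ ⊓ Gflag n m)
        = #{i : Fin (n - k) | transposePartition (n - k) l i + i + 1 ≤ m}
      ↔ Module.finrank ℝ ↥(V ⊓ Fflag n (n - m)) = #{j : Fin k | l j + j + 1 ≤ n - m}) := by
    intro m hm
    have hdim := Submodule.finrank_inf_orthogonal_add V (Fflag n (n - m))
    rw [← Gflag_eq_orthogonal_Fflag, hV, finrank_Fflag (Nat.sub_le n m),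
      finrank_euclideanSpace_fin] at hdim
    have hcount := card_filter_transposePartition_add hmono hfit (m := m) (by omega)
    rw [Nat.add_sub_cancel' hk] at hcount
    omega
  constructor
  · exact fun hF m hm ↦ (hcell m hm).2 (hF (n - m) (Nat.sub_le n m))
  · intro hG m hm
    have := (hcell (n - m) (Nat.sub_le n m)).1 (hG (n - m) (Nat.sub_le n m))
    rwa [Nat.sub_sub_self hm] at this
end

section
/- Let n, k ∈ ℕ with k ≤ n, let λ be a partition with k parts fitting in a k×(n−k) box, and let λᵀ be its transpose. Then for every m ≤ n: card {i : Fin (n−k) | λᵀ i + i + 1 ≤ m} + k = m + card {i : Fin k | λ i + i + 1 ≤ n − m}. (This dual counting identity underlies the fact that the perpendicular complement map carries the Schubert cell of λ onto the reverse-flag Schubert cell of λᵀ.) -/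
/-!
The numbers `λᵀ i + i` (for `i < n - k`) and `n - 1 - (λ j + j)` (for `j < k`) are `n` distinct
elements of `{0, …, n - 1}`, hence enumerate it exactly once; counting those below `m` gives the
identity. Distinctness is the heart of it: `λᵀ i` counts the `j` with `n - k - i ≤ λ j`, and since
`λ` is monotone these form a final segment of `Fin k`, so `λᵀ i + i + λ j + j` is `≤ n - 2` or
`≥ n` according to whether `j` lies outside or inside that segment.
-/

open Finset Function

theorem card_filter_lt_of_injective {γ : Type*} [Fintype γ] {h : γ → ℕ} (hinj : Injective h)
    (hlt : ∀ x, h x < Fintype.card γ) {t : ℕ} (ht : t ≤ Fintype.card γ) :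
    #{x | h x < t} = t := by
  have himage : univ.image h = range (Fintype.card γ) :=
    eq_of_subset_of_card_le
      (fun y hy => by obtain ⟨x, -, rfl⟩ := mem_image.1 hy; exact mem_range.2 (hlt x))
      (by rw [card_range, card_image_of_injective _ hinj, card_univ])
  calc #{x | h x < t} = #{y ∈ univ.image h | y < t} := by
        rw [filter_image, card_image_of_injective _ hinj]
    _ = t := by
        rw [himage, range_eq_Ico, Ico_filter_lt, min_eq_right ht, Nat.card_Ico, Nat.sub_zero]

theorem card_filter_lt_add_card_eq_add_card_filter_lt {α β : Type*} [Fintype α] [Fintype β]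
    {n : ℕ} {f : α → ℕ} {g : β → ℕ} (hf : Injective f) (hg : Injective g)
    (hfg : ∀ a b, f a + g b + 1 ≠ n) (hfn : ∀ a, f a < n) (hgn : ∀ b, g b < n)
    (hcard : Fintype.card α + Fintype.card β = n) {t : ℕ} (ht : t ≤ n) :
    #{a | f a < t} + Fintype.card β = t + #{b | g b < n - t} := by
  have hinj : Injective (Sum.elim f fun b => n - 1 - g b) :=
    hf.sumElim (fun b₁ b₂ h => hg (by have := hgn b₁; have := hgn b₂; omega))
      (fun a b h => hfg a b (by have := hgn b; have := hfn a; omega))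
  have hcount : #{a | f a < t} + #{b | n - 1 - g b < t} = t := by
    have := card_filter_lt_of_injective hinj (t := t)
      (by rintro (a | b) <;> simp only [Sum.elim_inl, Sum.elim_inr, Fintype.card_sum, hcard]
          · exact hfn a
          · have := hgn b; omega)
      (by rwa [Fintype.card_sum, hcard])
    rwa [card_filter, Fintype.sum_sum_type, ← card_filter, ← card_filter] at this
  have hdual : #{b | n - 1 - g b < t} = #{b | ¬ g b < n - t} := by
    congr 1
    exact filter_congr fun b _ => by have := hgn b; omega
  have hsplit : #{b | g b < n - t} + #{b | ¬ g b < n - t} = Fintype.card β :=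
    card_filter_add_card_filter_not _
  omega

namespace Monotone

variable {k : ℕ} {l : Fin k → ℕ}

theorem strictMono_add_val_s9 (hl : Monotone l) : StrictMono fun j => l j + (j : ℕ) :=
  fun _ _ h => Nat.add_lt_add_of_le_of_lt (hl h.le) h

theorem lt_iff_val_lt_card_filter_lt (hl : Monotone l) (a : ℕ) (j : Fin k) :
    l j < a ↔ (j : ℕ) < #{j' | l j' < a} := by
  constructor
  · intro hj
    calc (j : ℕ) < #(Iic j) := by rw [Fin.card_Iic]; omega
      _ ≤ #{j' | l j' < a} := card_le_card fun j' hj' =>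
          mem_filter.2 ⟨mem_univ _, (hl (mem_Iic.1 hj')).trans_lt hj⟩
  · intro hj
    by_contra! ha
    have hsub : #{j' | l j' < a} ≤ #(Iio j) := card_le_card fun j' hj' => by
      rw [mem_filter] at hj'
      exact mem_Iio.2 (lt_of_not_ge fun h => (hj'.2.trans_le (ha.trans (hl h))).false)
    rw [Fin.card_Iio] at hsub
    omega

theorem add_val_add_card_filter_le_add_one_ne (hl : Monotone l) (a : ℕ) (j : Fin k) :
    l j + j + #{j' | a ≤ l j'} + 1 ≠ a + k := by
  have hsplit : #{j' | l j' < a} + #{j' | ¬ l j' < a} = k := by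
    simpa using card_filter_add_card_filter_not (s := (univ : Finset (Fin k))) (fun j' => l j' < a)
  simp only [not_lt] at hsplit
  by_cases hja : l j < a
  · have := (hl.lt_iff_val_lt_card_filter_lt a j).1 hja
    omega
  · have := mt (hl.lt_iff_val_lt_card_filter_lt a j).2 hja
    omega

end Monotone

def boxTranspose (n : ℕ) {k : ℕ} (l : Fin k → ℕ) (i : Fin (n - k)) : ℕ :=
  #{j | n - k < l j + (i : ℕ) + 1}

section BoxTranspose

variable {n k : ℕ} {l : Fin k → ℕ}

theorem boxTranspose_eq_card_filter_le (i : Fin (n - k)) :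
    boxTranspose n l i = #{j | n - k - i ≤ l j} := by
  unfold boxTranspose
  congr 1
  exact filter_congr fun j _ => by omega

theorem monotone_boxTranspose : Monotone (boxTranspose n l) := fun i₁ i₂ hi =>
  card_le_card fun j hj => by
    rw [mem_filter] at hj ⊢
    exact ⟨hj.1, hj.2.trans_le (by simp only [Fin.le_def] at hi; omega)⟩

theorem boxTranspose_add_val_lt (i : Fin (n - k)) : boxTranspose n l i + i < n := by
  have hle : boxTranspose n l i ≤ k := (card_filter_le _ _).trans_eq (card_fin k)
  omega

theorem boxTranspose_add_val_add_add_val_add_one_ne (hl : Monotone l) (i : Fin (n - k))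
    (j : Fin k) : boxTranspose n l i + i + (l j + j) + 1 ≠ n := by
  have := hl.add_val_add_card_filter_le_add_one_ne (n - k - i) j
  rw [← boxTranspose_eq_card_filter_le] at this
  omega

end BoxTranspose

/-- The dual counting identity underlying the perp map on Schubert cells. -/
theorem transpose_dual_counting (n k : ℕ) (hk : k ≤ n) (l : Fin k → ℕ)
    (hmono : Monotone l) (hfit : ∀ i, l i ≤ n - k)
    (lT : Fin (n - k) → ℕ)
    (hlT : ∀ i, lT i
      = (Finset.univ.filter (fun j : Fin k => n - k < l j + (i : ℕ) + 1)).card) :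
    ∀ m ≤ n,
      (Finset.univ.filter (fun i : Fin (n - k) => lT i + (i : ℕ) + 1 ≤ m)).card + k
        = m + (Finset.univ.filter (fun i : Fin k => l i + (i : ℕ) + 1 ≤ n - m)).card := by
  intro m hm
  obtain rfl : lT = boxTranspose n l := funext hlT
  have hcount := card_filter_lt_add_card_eq_add_card_filter_lt
    monotone_boxTranspose.strictMono_add_val_s9.injective hmono.strictMono_add_val_s9.injective
    (boxTranspose_add_val_add_add_val_add_one_ne hmono) boxTranspose_add_val_lt
    (fun j => by have := hfit j; omega) (by simp only [Fintype.card_fin]; omega) hm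
  simpa only [Fintype.card_fin, Nat.lt_iff_add_one_le] using hcount
end
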